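/- Let q : ℝ^(n×d) → ℝ^(n×d) be a permutation-equivariant bijection (i.e., q(Γx) = Γ q(x) for every permutation matrix Γ acting on rows) and let f : ℝ^(n×d) → ℝ be permutation invariant (f(Γz) = f(z) for all permutation matrices Γ). Then the function p(x) = |det Dq(x)| · f(q(x)) is permutation invariant: p(Γx) = p(x) for every permutation matrix Γ. -/

import Mathlib

/-! The row permutation `x ↦ x ∘ π` is a linear automorphism `e` commuting with `q`, so the chain
rule gives `Dq(e x) = e ∘ Dq(x) ∘ e⁻¹`, whose determinant is that of `Dq(x)`; and
`f (q (e x)) = f (e (q x)) = f (q x)`. -/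

section Conjugation

variable {𝕜 V : Type*} [NontriviallyNormedField 𝕜] [NormedAddCommGroup V] [NormedSpace 𝕜 V]

theorem fderiv_apply_eq_conj_of_comp_eq_comp (e : V ≃L[𝕜] V) {q : V → V} (h : q ∘ e = e ∘ q)
    (x : V) :
    fderiv 𝕜 q (e x) = (e : V →L[𝕜] V) ∘L fderiv 𝕜 q x ∘L (e.symm : V →L[𝕜] V) := by
  have hchain : fderiv 𝕜 q (e x) ∘L (e : V →L[𝕜] V) = (e : V →L[𝕜] V) ∘L fderiv 𝕜 q x := by
    rw [← e.comp_right_fderiv, h, e.comp_fderiv]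
  rw [← ContinuousLinearMap.comp_assoc, ← hchain, ContinuousLinearMap.comp_assoc,
    e.coe_comp_coe_symm, ContinuousLinearMap.comp_id]

theorem det_fderiv_apply_eq_of_comp_eq_comp (e : V ≃L[𝕜] V) {q : V → V} (h : q ∘ e = e ∘ q)
    (x : V) :
    LinearMap.det (fderiv 𝕜 q (e x) : V →ₗ[𝕜] V) = LinearMap.det (fderiv 𝕜 q x : V →ₗ[𝕜] V) := by
  rw [fderiv_apply_eq_conj_of_comp_eq_comp e h x]
  exact LinearMap.det_conj _ e.toLinearEquiv

end Conjugation

theorem stmt_0_general (n d : ℕ)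
    (q : (Fin n → Fin d → ℝ) → (Fin n → Fin d → ℝ))
    (f : (Fin n → Fin d → ℝ) → ℝ)
    (heq : ∀ (π : Equiv.Perm (Fin n)) (x : Fin n → Fin d → ℝ), q (x ∘ π) = (q x) ∘ π)
    (hf : ∀ (π : Equiv.Perm (Fin n)) (z : Fin n → Fin d → ℝ), f (z ∘ π) = f z) :
    ∀ (π : Equiv.Perm (Fin n)) (x : Fin n → Fin d → ℝ),
      |LinearMap.det ((fderiv ℝ q (x ∘ π)).toLinearMap)| * f (q (x ∘ π))
        = |LinearMap.det ((fderiv ℝ q x).toLinearMap)| * f (q x) := by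
  intro π x
  let e := (LinearEquiv.funCongrLeft ℝ (Fin d → ℝ) π).toContinuousLinearEquiv
  have hdet := det_fderiv_apply_eq_of_comp_eq_comp e (funext fun y => heq π y) x
  rw [heq, hf, ← show e x = x ∘ π from rfl, hdet]

/-- If `q` is a permutation-equivariant differentiable bijection of `ℝ^(n×d)`
(rows permuted) and `f` is permutation invariant, then
`p x = |det Dq(x)| * f (q x)` is permutation invariant. -/
theorem stmt_0 (n d : ℕ)
    (q : (Fin n → Fin d → ℝ) → (Fin n → Fin d → ℝ))
    (f : (Fin n → Fin d → ℝ) → ℝ)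
    (hq : Differentiable ℝ q)
    (hbij : Function.Bijective q)
    (heq : ∀ (π : Equiv.Perm (Fin n)) (x : Fin n → Fin d → ℝ), q (x ∘ π) = (q x) ∘ π)
    (hf : ∀ (π : Equiv.Perm (Fin n)) (z : Fin n → Fin d → ℝ), f (z ∘ π) = f z) :
    ∀ (π : Equiv.Perm (Fin n)) (x : Fin n → Fin d → ℝ),
      |LinearMap.det ((fderiv ℝ q (x ∘ π)).toLinearMap)| * f (q (x ∘ π))
        = |LinearMap.det ((fderiv ℝ q x).toLinearMap)| * f (q x) :=
  stmt_0_general n d q f heq hf
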